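/- arXiv:2003.08878 — 6 statements merged into one kernel-verified Lean document; each statement's English description precedes it below -/
import Mathlib

section
/- Let R be a commutative ring, I an ideal of R, and x an element of R. For all natural numbers n ≥ m, we have (x^n) ∩ x^m·(I : x^∞) = x^n·(I : x^∞), where (I : x^∞) = ⋃_{k≥1} (I : x^k) denotes the saturation of I with respect to x. -/
/-- The saturation `I : x^∞ = ⋃ k, (I : x^k)`. -/
noncomputable def satur {R : Type*} [CommRing R] (I : Ideal R) (x : R) : Ideal R :=
  ⨆ k : ℕ, Submodule.colon I (Ideal.span {x ^ k})

section Saturation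

variable {R : Type*} [CommRing R] (I : Ideal R) (x : R)

lemma monotone_colon_span_pow :
    Monotone fun k : ℕ => Submodule.colon I (Ideal.span {x ^ k}) := by
  intro a b hab r hr
  rw [Ideal.mem_colon_span_singleton] at hr ⊢
  obtain ⟨c, rfl⟩ := Nat.exists_eq_add_of_le hab
  rw [pow_add, ← mul_assoc]
  exact I.mul_mem_right _ hr

lemma mem_satur_iff {r : R} : r ∈ satur I x ↔ ∃ k : ℕ, x ^ k * r ∈ I := by
  simp only [satur, Submodule.mem_iSup_of_directed _ (monotone_colon_span_pow I x).directed_le,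
    Ideal.mem_colon_span_singleton, mul_comm]

lemma pow_mul_mem_satur_iff {r : R} (j : ℕ) : x ^ j * r ∈ satur I x ↔ r ∈ satur I x := by
  simp only [mem_satur_iff]
  constructor
  · rintro ⟨k, hk⟩
    exact ⟨k + j, by rwa [pow_add, mul_assoc]⟩
  · rintro ⟨k, hk⟩
    exact ⟨k, by rw [mul_left_comm]; exact I.mul_mem_left _ hk⟩

lemma span_pow_inf_le_span_pow_mul_satur {J : Ideal R} (hJ : J ≤ satur I x) (n : ℕ) :
    Ideal.span {x ^ n} ⊓ J ≤ Ideal.span {x ^ n} * satur I x := by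
  rintro a ⟨han, haJ⟩
  obtain ⟨r, rfl⟩ := Ideal.mem_span_singleton.mp han
  exact Ideal.mul_mem_mul (Ideal.mem_span_singleton_self _)
    ((pow_mul_mem_satur_iff I x n).mp (hJ haJ))

end Saturation

theorem stmt0 {R : Type*} [CommRing R] (I : Ideal R) (x : R) (m n : ℕ) (h : m ≤ n) :
    Ideal.span {x ^ n} ⊓ (Ideal.span {x ^ m} * satur I x)
      = Ideal.span {x ^ n} * satur I x := by
  refine le_antisymm (span_pow_inf_le_span_pow_mul_satur I x Ideal.mul_le_right n) ?_
  refine le_inf Ideal.mul_le_left (Ideal.mul_mono_left ?_)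
  exact Ideal.span_singleton_le_span_singleton.mpr (pow_dvd_pow x h)
end

section
/- Let R be a commutative ring, I an ideal, and x ∈ R. For all integers n, m, α with n + 1 ≥ α > m ≥ 1, one has (x^m) ∩ ( Σ_{i=0}^{m-2} x^i·(I^{n-i} : x^∞) + x^{m-1}·(I^{n+1-α} : x^∞) ) = x^m·(I^{n+1-α} : x^∞). -/
section Saturation

variable {R : Type*} [CommRing R]

theorem mem_satur {I : Ideal R} {x r : R} : r ∈ satur I x ↔ ∃ k, x ^ k * r ∈ I := by
  have hmono : Monotone fun k : ℕ => Submodule.colon I (Ideal.span {x ^ k}) := fun k l hkl =>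
    Submodule.colon_mono le_rfl (Ideal.span_singleton_le_span_singleton.2 (pow_dvd_pow x hkl))
  simp only [satur, Submodule.mem_iSup_of_directed _ hmono.directed_le,
    Submodule.mem_colon_span_singleton, smul_eq_mul, mul_comm r]

theorem satur_mono {I J : Ideal R} (h : I ≤ J) (x : R) : satur I x ≤ satur J x := fun _ hr =>
  let ⟨k, hk⟩ := mem_satur.1 hr
  mem_satur.2 ⟨k, h hk⟩

theorem satur_pow_antitone (I : Ideal R) (x : R) {a b : ℕ} (hab : a ≤ b) :
    satur (I ^ b) x ≤ satur (I ^ a) x :=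
  satur_mono (Ideal.pow_le_pow_right hab) x

theorem mem_satur_of_mul_mem {I : Ideal R} {x u : R} (m : ℕ) (h : x ^ m * u ∈ satur I x) :
    u ∈ satur I x := by
  obtain ⟨k, hk⟩ := mem_satur.1 h
  exact mem_satur.2 ⟨k + m, by rwa [pow_add, mul_assoc]⟩

theorem span_pow_inf_satur (I : Ideal R) (x : R) (m : ℕ) :
    Ideal.span {x ^ m} ⊓ satur I x = Ideal.span {x ^ m} * satur I x := by
  refine le_antisymm ?_ (le_inf Ideal.mul_le_left Ideal.mul_le_right)
  rintro r ⟨hrx, hrS⟩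
  obtain ⟨u, rfl⟩ := Ideal.mem_span_singleton'.1 hrx
  rw [mul_comm u] at hrS ⊢
  exact Ideal.mul_mem_mul (Ideal.mem_span_singleton_self _) (mem_satur_of_mul_mem m hrS)

theorem span_pow_inf_eq_of_le_satur {I J : Ideal R} {x : R} {m : ℕ} (hJ : J ≤ satur I x)
    (hJ' : Ideal.span {x ^ m} * satur I x ≤ J) :
    Ideal.span {x ^ m} ⊓ J = Ideal.span {x ^ m} * satur I x := by
  rw [← span_pow_inf_satur]
  exact le_antisymm (inf_le_inf_left _ hJ)
    (le_inf inf_le_left ((span_pow_inf_satur I x m).le.trans hJ'))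

end Saturation

theorem stmt1_general {R : Type*} [CommRing R] (I : Ideal R) (x : R) (n m α : ℕ)
    (h2 : m < α) :
    Ideal.span {x ^ m} ⊓
      ((∑ i ∈ Finset.range (m - 1), Ideal.span {x ^ i} * satur (I ^ (n - i)) x) +
        Ideal.span {x ^ (m - 1)} * satur (I ^ (n + 1 - α)) x)
      = Ideal.span {x ^ m} * satur (I ^ (n + 1 - α)) x := by
  refine span_pow_inf_eq_of_le_satur (sup_le ?_ Ideal.mul_le_right) <|
    le_sup_of_le_right <| Ideal.mul_mono_left <|
      Ideal.span_singleton_le_span_singleton.2 (pow_dvd_pow x (m.sub_le 1))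
  rw [Ideal.sum_eq_sup]
  refine Finset.sup_le fun i hi => Ideal.mul_le_right.trans (satur_pow_antitone I x ?_)
  have := Finset.mem_range.1 hi
  omega

theorem stmt1 {R : Type*} [CommRing R] (I : Ideal R) (x : R) (n m α : ℕ)
    (h1 : 1 ≤ m) (h2 : m < α) (h3 : α ≤ n + 1) :
    Ideal.span {x ^ m} ⊓
      ((∑ i ∈ Finset.range (m - 1), Ideal.span {x ^ i} * satur (I ^ (n - i)) x) +
        Ideal.span {x ^ (m - 1)} * satur (I ^ (n + 1 - α)) x)
      = Ideal.span {x ^ m} * satur (I ^ (n + 1 - α)) x :=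
  stmt1_general I x n m α h2
end

section
/- Let R be a Noetherian local ring and x_1, …, x_s a regular sequence in the maximal ideal, with Q_{s-1} = (x_1,…,x_{s-1}). Then for every m ≥ 1, x_s is a nonzerodivisor on R/Q_{s-1}^m, i.e., Q_{s-1}^m : x_s = Q_{s-1}^m. -/
/-!
Let `y = x_s`, and write `Q = (x) + L` where `x = x₁` and `L = (x₂, …, x_{s-1})`. Argue by
induction on the length of the sequence and then on the exponent. If `r y ∈ Q^{n+1}`, then
working modulo `x`, the shorter sequence gives `r = q + t x` with `q ∈ L^{n+1}`.
Since `Q^{n+1} ⊆ L^{n+1} + x Q^n`, we get `(t y - h) x ∈ L^{n+1}` for some `h ∈ Q^n`. Regular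
sequences in the Jacobson radical of a Noetherian ring may be permuted, so `x` is regular
modulo `L^{n+1}`; hence `t y ∈ Q^n`, so `t ∈ Q^n` by induction on `n`, and `r ∈ Q^{n+1}`.
-/

open RingTheory.Sequence Ideal

section

variable {R : Type*} [CommRing R]

theorem Ideal.sup_pow_succ_le (I J : Ideal R) (n : ℕ) :
    (I ⊔ J) ^ (n + 1) ≤ J ^ (n + 1) ⊔ I * (I ⊔ J) ^ n := by
  induction n with
  | zero => simp
  | succ n ih =>
    calc (I ⊔ J) ^ (n + 2) = I * (I ⊔ J) ^ (n + 1) ⊔ J * (I ⊔ J) ^ (n + 1) := by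
          rw [pow_succ', sup_mul]
      _ ≤ I * (I ⊔ J) ^ (n + 1) ⊔ J * (J ^ (n + 1) ⊔ I * (I ⊔ J) ^ n) := by gcongr
      _ ≤ J ^ (n + 2) ⊔ I * (I ⊔ J) ^ (n + 1) := by
          rw [mul_sup, ← pow_succ', mul_left_comm]
          refine sup_le le_sup_right (sup_le le_sup_left (le_sup_of_le_right ?_))
          rw [pow_succ' (I ⊔ J)]
          exact mul_mono_right (mul_mono_left le_sup_right)

theorem Ideal.mem_span_singleton_sup_pow_succ_of_mul_mem {I : Ideal R} {x y r : R} {n : ℕ}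
    (hmod : r ∈ I ^ (n + 1) ⊔ span {x})
    (hx : ∀ a, a * x ∈ I ^ (n + 1) → a ∈ I ^ (n + 1))
    (hy : ∀ a, a * y ∈ (span {x} ⊔ I) ^ n → a ∈ (span {x} ⊔ I) ^ n)
    (hr : r * y ∈ (span {x} ⊔ I) ^ (n + 1)) : r ∈ (span {x} ⊔ I) ^ (n + 1) := by
  set Q := span {x} ⊔ I
  have hIQ : I ^ (n + 1) ≤ Q ^ (n + 1) := pow_right_mono le_sup_right _
  obtain ⟨q, hq, _, ht, rfl⟩ := Submodule.mem_sup.mp hmod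
  obtain ⟨t, rfl⟩ := mem_span_singleton'.mp ht
  have htyx : t * y * x ∈ Q ^ (n + 1) := by
    have : t * y * x = (q + t * x) * y - q * y := by ring
    exact this ▸ sub_mem hr (mul_mem_right y _ (hIQ hq))
  obtain ⟨g, hg, _, hxh, hgh⟩ := Submodule.mem_sup.mp (sup_pow_succ_le _ _ n htyx)
  obtain ⟨h, hh, rfl⟩ := mem_span_singleton_mul.mp hxh
  have hty : t * y ∈ Q ^ n := by
    have : (t * y - h) * x = g := by linear_combination hgh.symm
    have hdiff := hx _ (this ▸ hg)
    have hle : I ^ (n + 1) ≤ Q ^ n := hIQ.trans (pow_le_pow_right (by omega))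
    simpa using add_mem (hle hdiff) hh
  have htx : t * x ∈ Q ^ (n + 1) := by
    rw [pow_succ]
    exact mul_mem_mul (hy t hty) (mem_sup_left (mem_span_singleton_self x))
  exact add_mem (hIQ hq) htx

theorem RingTheory.Sequence.IsWeaklyRegular.quotient_span_singleton {x : R} {rs : List R}
    (h : IsWeaklyRegular R (x :: rs)) :
    IsWeaklyRegular (R ⧸ span {x}) (rs.map (Ideal.Quotient.mk (span {x}))) := by
  let e : QuotSMulTop x R ≃ₗ[R] R ⧸ span {x} :=
    Submodule.quotEquivOfEq _ _ (by simp [← Submodule.ideal_span_singleton_smul])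
  rw [← Quotient.algebraMap_eq, isWeaklyRegular_map_algebraMap_iff, ← e.isWeaklyRegular_congr]
  exact ((isWeaklyRegular_cons_iff R x rs).mp h).2

theorem RingTheory.Sequence.IsWeaklyRegular.of_perm_of_subset_ringJacobson [IsNoetherianRing R]
    {rs rs' : List R} (h : IsWeaklyRegular R rs) (hperm : rs.Perm rs')
    (hjac : ∀ r ∈ rs, r ∈ Ring.jacobson R) : IsWeaklyRegular R rs' :=
  h.of_perm_of_subset_jacobson_annihilator hperm fun r hr => ringJacobson_le_jacobson (hjac r hr)

theorem Ideal.mem_ofList_pow_of_mul_mem [IsNoetherianRing R] {l : List R} {y : R}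
    (hreg : IsWeaklyRegular R (l ++ [y])) (hjac : ∀ a ∈ l ++ [y], a ∈ Ring.jacobson R)
    (n : ℕ) {r : R} (hr : r * y ∈ ofList l ^ n) : r ∈ ofList l ^ n := by
  induction hlen : l.length generalizing R n with
  | zero =>
    obtain rfl := List.eq_nil_of_length_eq_zero hlen
    cases n with
    | zero => simp
    | succ n =>
      have hy : IsSMulRegular R y := (isWeaklyRegular_singleton_iff R y).mp hreg
      rw [ofList_nil, ← zero_eq_bot, zero_pow n.succ_ne_zero, zero_eq_bot, mem_bot] at hr ⊢
      exact hy.right_eq_zero_of_smul (by rwa [smul_eq_mul, mul_comm])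
  | succ k ih =>
    obtain ⟨x, l, rfl⟩ := List.exists_cons_of_length_eq_add_one hlen
    rw [ofList_cons] at hr ⊢
    induction n generalizing r with
    | zero => simp
    | succ n ihn =>
      apply mem_span_singleton_sup_pow_succ_of_mul_mem _ _ (fun _ => ihn) hr
      · let mk := Quotient.mk (span {x})
        have hmk {a : R} (n : ℕ) :
            mk a ∈ ofList (l.map mk) ^ n ↔ a ∈ ofList l ^ n ⊔ span {x} := by
          rw [← map_ofList, ← Ideal.map_pow, mem_quotient_iff_mem_sup]
        have hreg' : IsWeaklyRegular (R ⧸ span {x}) (l.map mk ++ [mk y]) := by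
          simpa using hreg.quotient_span_singleton
        have hjac' : ∀ a ∈ l.map mk ++ [mk y], a ∈ Ring.jacobson (R ⧸ span {x}) := by
          rw [← List.map_singleton, ← List.map_append, List.forall_mem_map]
          exact fun a ha => Ring.le_comap_jacobson mk (hjac a (List.mem_cons_of_mem x ha))
        refine (hmk _).mp (ih hreg' hjac' (n + 1) ?_ (by simpa using hlen))
        rw [← map_mul, hmk]
        exact (sup_pow_succ_le _ _ n).trans (sup_le_sup_left Ideal.mul_le_left _) hr
      · have hxl : IsWeaklyRegular R (x :: l) := ((isWeaklyRegular_append_iff R _ _).mp hreg).1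
        have hjac' : ∀ a ∈ x :: l, a ∈ Ring.jacobson R :=
          fun a ha => hjac a (List.mem_append_left _ ha)
        have hlx : IsWeaklyRegular R (l ++ [x]) :=
          hxl.of_perm_of_subset_ringJacobson (List.perm_append_comm (l₁ := [x])) hjac'
        exact fun a ha => ih hlx (by simpa [or_comm] using hjac') (n + 1) ha (by simpa using hlen)

end

theorem stmt4_general {R : Type*} [CommRing R] [IsLocalRing R] [IsNoetherianRing R] {s : ℕ}
    (x : Fin (s + 1) → R) (hmem : ∀ i, x i ∈ IsLocalRing.maximalIdeal R)
    (hreg : RingTheory.Sequence.IsRegular R (List.ofFn x)) (m : ℕ) :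
    Submodule.colon ((Ideal.span (Set.range fun i : Fin s => x i.castSucc)) ^ m)
        (Ideal.span {x (Fin.last s)})
      = (Ideal.span (Set.range fun i : Fin s => x i.castSucc)) ^ m := by
  set l := List.ofFn fun i : Fin s => x i.castSucc
  have hofFn : List.ofFn x = l ++ [x (Fin.last s)] := by
    rw [List.ofFn_succ', List.concat_eq_append]
  have hspan : span (Set.range fun i : Fin s => x i.castSucc) = ofList l := by
    congr 1
    ext
    simp [l, List.mem_ofFn']
  have hjac : ∀ a ∈ List.ofFn x, a ∈ Ring.jacobson R := by
    rw [IsLocalRing.ringJacobson_eq_maximalIdeal]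
    exact List.forall_mem_ofFn_iff.mpr hmem
  rw [hofFn] at hreg hjac
  rw [hspan]
  refine le_antisymm (fun r hr => ?_) le_colon
  exact mem_ofList_pow_of_mul_mem hreg.toIsWeaklyRegular hjac m (mem_colon_span_singleton.mp hr)

theorem stmt4 {R : Type*} [CommRing R] [IsLocalRing R] [IsNoetherianRing R] {s : ℕ}
    (x : Fin (s + 1) → R) (hmem : ∀ i, x i ∈ IsLocalRing.maximalIdeal R)
    (hreg : RingTheory.Sequence.IsRegular R (List.ofFn x)) (m : ℕ) (hm : 1 ≤ m) :
    Submodule.colon ((Ideal.span (Set.range fun i : Fin s => x i.castSucc)) ^ m)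
        (Ideal.span {x (Fin.last s)})
      = (Ideal.span (Set.range fun i : Fin s => x i.castSucc)) ^ m :=
  stmt4_general x hmem hreg m
end

section
/- Let R be a Noetherian local ring and x_1,…,x_s a regular sequence in the maximal ideal. Then for all n ≥ 1, ⋂_{α=1}^{n} ( (x_s^α) + Q_{s-1}^{n+1-α} ) = Q_s^n, where Q_{s-1} = (x_1,…,x_{s-1}) and Q_s = (x_1,…,x_s). -/
/-!
Write `z = x_s` and `Q = Q_{s-1}`, so that `Q_s = (z) + Q`. The inclusion `⊇` is the binomial
expansion of `((z) + Q)^n`. For `⊆`, peel off one power of `z` at a time: if `y = z^j a + w`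
with `w ∈ Q_s^n ∩ Q^(n+1-j)`, then `y ∈ (z^(j+1)) + Q^(n-j)` gives `z^j (a - b z) ∈ Q^(n-j)`,
hence `a - b z ∈ Q^(n-j)` and `y ∈ (z^(j+1)) + Q_s^n ∩ Q^(n-j)`; at `j = n` this is
`y ∈ Q_s^n`.

The step needs `z` to be a nonzerodivisor modulo every power `Q^m`, not only modulo `Q`. This
comes from quasi-regularity of `x_1, …, x_{s-1}` (Matsumura, Thm. 16.2): a form of degree `m`
in these elements whose value lies in `Q^(m+1)` has all its coefficients in `Q`.
Quasi-regularity is proved by induction on the number of elements, splitting a form `F` as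
`X_i H + G` with `G` free of `X_i`.
-/

open MvPolynomial

namespace Ideal

variable {R : Type*} [CommRing R]

theorem sup_pow_le_pow_sup_pow_of_add_eq (I J : Ideal R) {n a b : ℕ} (h : n + 1 = a + b) :
    (I ⊔ J) ^ n ≤ I ^ a ⊔ J ^ b := by
  rw [← add_eq_sup, ← add_eq_sup, add_pow, sum_eq_sup]
  refine Finset.sup_le fun i hi => ?_
  rw [Finset.mem_range] at hi
  by_cases ha : a ≤ i
  · exact mul_le_left.trans (mul_le_left.trans ((pow_le_pow_right ha).trans le_sup_left))
  · exact mul_le_left.trans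
      (mul_le_right.trans ((pow_le_pow_right (by omega)).trans le_sup_right))

variable {z : R} {Q : Ideal R}

theorem iInf_span_pow_sup_pow_le (hz : ∀ m, IsSMulRegular (R ⧸ Q ^ m) z) {n j : ℕ}
    (hj : j ≤ n) : ⨅ α ∈ Finset.Icc 1 n, (span {z ^ α} ⊔ Q ^ (n + 1 - α)) ≤
      span {z ^ j} ⊔ (span {z} ⊔ Q) ^ n ⊓ Q ^ (n + 1 - j) := by
  intro y hy
  simp only [Submodule.mem_iInf] at hy
  induction j with
  | zero => simp
  | succ j ih =>
    obtain ⟨p, hp, w, hw, rfl⟩ := Submodule.mem_sup.mp (ih (by omega))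
    obtain ⟨a, rfl⟩ := mem_span_singleton'.mp hp
    have hyj := hy (j + 1) (Finset.mem_Icc.mpr ⟨by omega, hj⟩)
    rw [show n + 1 - (j + 1) = n - j by omega] at hyj ⊢
    obtain ⟨p', hp', q, hq, hpq⟩ := Submodule.mem_sup.mp hyj
    obtain ⟨b, rfl⟩ := mem_span_singleton'.mp hp'
    have hw' : w ∈ Q ^ (n - j) := pow_le_pow_right (by omega) hw.2
    have hc : a - b * z ∈ Q ^ (n - j) := by
      refine mem_of_isSMulRegular_quotient_of_smul_mem ((hz (n - j)).pow j) ?_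
      rw [smul_eq_mul, show z ^ j * (a - b * z) = q - w by linear_combination -hpq]
      exact sub_mem hq hw'
    have hcP : z ^ j * (a - b * z) ∈ (span {z} ⊔ Q) ^ n := by
      rw [show n = j + (n - j) by omega, pow_add]
      exact mul_mem_mul (pow_mem_pow (mem_sup_left (mem_span_singleton_self z)) j)
        (pow_right_mono le_sup_right _ hc)
    refine Submodule.mem_sup.mpr ⟨b * z ^ (j + 1), mem_span_singleton'.mpr ⟨b, rfl⟩,
      z ^ j * (a - b * z) + w, ⟨add_mem hcP hw.1, add_mem (mul_mem_left _ _ hc) hw'⟩, by ring⟩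

theorem iInf_span_pow_sup_pow_eq (hz : ∀ m, IsSMulRegular (R ⧸ Q ^ m) z) (n : ℕ) :
    ⨅ α ∈ Finset.Icc 1 n, (span {z ^ α} ⊔ Q ^ (n + 1 - α)) = (span {z} ⊔ Q) ^ n := by
  refine le_antisymm ((iInf_span_pow_sup_pow_le hz le_rfl).trans ?_) (le_iInf₂ fun α hα => ?_)
  · rw [← span_singleton_pow]
    exact sup_le (pow_right_mono le_sup_left n) inf_le_left
  · rw [← span_singleton_pow]
    exact sup_pow_le_pow_sup_pow_of_add_eq _ _ (by grind)

end Ideal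

namespace MvPolynomial

variable {R σ : Type*} [CommRing R] {s : Set σ} {F : MvPolynomial σ R}

theorem mem_supported_iff_forall_support_subset :
    F ∈ supported R s ↔ ∀ d ∈ F.support, ↑d.support ⊆ s := by
  simp only [mem_supported, Set.subset_def, Finset.mem_coe, mem_vars_iff_mem_support]
  grind

theorem IsHomogeneous.eq_zero_of_aeval_eq_zero {x : σ → R} (hF : F.IsHomogeneous 0)
    (h : MvPolynomial.aeval x F = 0) : F = 0 := by
  rw [totalDegree_eq_zero_iff_eq_C.mp ((totalDegree_zero_iff_isHomogeneous σ).mpr hF)] at h ⊢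
  rw [aeval_C, Algebra.algebraMap_self, RingHom.id_apply] at h
  rw [h, map_zero]

theorem IsHomogeneous.divMonomial_single {n : ℕ} (hF : F.IsHomogeneous (n + 1)) (i : σ) :
    (F.divMonomial (Finsupp.single i 1)).IsHomogeneous n := by
  intro d hd
  rw [coeff_divMonomial] at hd
  have := hF hd
  simp only [map_add, Finsupp.weight_single, Pi.one_apply, smul_eq_mul, mul_one] at this
  omega

theorem IsHomogeneous.modMonomial {n : ℕ} (hF : F.IsHomogeneous n) (e : σ →₀ ℕ) :
    (F.modMonomial e).IsHomogeneous n := by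
  intro d hd
  by_cases h : e ≤ d
  · simp [coeff_modMonomial_of_le _ h] at hd
  · rw [coeff_modMonomial_of_not_le _ h] at hd
    exact hF hd

theorem divMonomial_mem_supported (hF : F ∈ supported R s) (e : σ →₀ ℕ) :
    F.divMonomial e ∈ supported R s := by
  rw [mem_supported_iff_forall_support_subset] at hF ⊢
  intro d hd
  exact (Finset.coe_subset.mpr (Finsupp.support_mono le_add_self)).trans
    (hF (e + d) (by simpa using hd))

theorem modMonomial_single_mem_supported {i : σ} (hF : F ∈ supported R (insert i s)) :
    F.modMonomial (Finsupp.single i 1) ∈ supported R s := by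
  rw [mem_supported_iff_forall_support_subset] at hF ⊢
  intro d hd j hj
  have hid : ¬ Finsupp.single i 1 ≤ d := fun h => by simp [coeff_modMonomial_of_le _ h] at hd
  rw [mem_support_iff, coeff_modMonomial_of_not_le _ hid] at hd
  rcases hF d (mem_support_iff.mpr hd) hj with rfl | hj
  · exact absurd (Finsupp.single_le_iff.mpr
      (Nat.one_le_iff_ne_zero.mpr (Finsupp.mem_support_iff.mp hj))) hid
  · exact hj

theorem exists_eq_X_mul_add_of_isHomogeneous {i : σ} {n : ℕ}
    (hs : F ∈ supported R (insert i s)) (hn : F.IsHomogeneous (n + 1)) :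
    ∃ H ∈ supported R (insert i s), H.IsHomogeneous n ∧
      ∃ G ∈ supported R s, G.IsHomogeneous (n + 1) ∧ F = X i * H + G :=
  ⟨_, divMonomial_mem_supported hs _, hn.divMonomial_single i, _,
    modMonomial_single_mem_supported hs, hn.modMonomial _,
    (divMonomial_add_modMonomial_single F i).symm⟩

variable (x : σ → R)

theorem prod_pow_mem_span_image_pow {d : σ →₀ ℕ} (hd : ↑d.support ⊆ s) :
    (d.prod fun i k => x i ^ k) ∈ Ideal.span (x '' s) ^ d.degree := by
  rw [Finsupp.prod, Finsupp.degree_apply, ← Finset.prod_pow_eq_pow_sum]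
  exact Ideal.prod_mem_prod fun i hi =>
    Ideal.pow_mem_pow (Ideal.subset_span (Set.mem_image_of_mem x (hd hi))) _

theorem aeval_mem_mul_span_image_pow {I : Ideal R} {n : ℕ} (hs : F ∈ supported R s)
    (hn : F.IsHomogeneous n) (hI : F ∈ I.map C) :
    aeval x F ∈ I * Ideal.span (x '' s) ^ n := by
  rw [F.as_sum, map_sum]
  refine Ideal.sum_mem _ fun d hd => ?_
  rw [aeval_monomial, hn.degree_eq_sum_deg_support hd]
  exact Ideal.mul_mem_mul (mem_map_C_iff.mp hI d)
    (prod_pow_mem_span_image_pow x (mem_supported_iff_forall_support_subset.mp hs d hd))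

theorem exists_isHomogeneous_of_mem_mul_span_image_pow {I : Ideal R} {n : ℕ} {r : R}
    (hr : r ∈ I * Ideal.span (x '' s) ^ n) :
    ∃ F ∈ supported R s, F.IsHomogeneous n ∧ F ∈ I.map C ∧ aeval x F = r := by
  let V (n : ℕ) : Ideal R := Submodule.map (aeval x).toLinearMap
    ((supported R s).toSubmodule ⊓ homogeneousSubmodule σ R n ⊓ (I.map C).restrictScalars R)
  suffices ∀ n, I * Ideal.span (x '' s) ^ n ≤ V n by
    obtain ⟨F, ⟨⟨hs, hn⟩, hI⟩, rfl⟩ := this n hr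
    exact ⟨F, hs, hn, hI, rfl⟩
  intro n
  induction n with
  | zero =>
    intro r hr
    rw [pow_zero, Ideal.one_eq_top, Ideal.mul_top] at hr
    exact ⟨C r, ⟨⟨Subalgebra.algebraMap_mem _ r, isHomogeneous_C σ r⟩,
      Ideal.mem_map_of_mem C hr⟩, aeval_C x r⟩
  | succ n ih =>
    rw [pow_succ, ← mul_assoc]
    refine Ideal.mul_le.mpr fun a ha b hb => ?_
    obtain ⟨F, ⟨⟨hs, hn⟩, hI⟩, rfl⟩ := ih ha
    suffices Ideal.span (x '' s) ≤
        Submodule.comap (LinearMap.mulLeft R (aeval x F)) (V (n + 1)) from this hb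
    rw [Ideal.span_le]
    rintro _ ⟨i, hi, rfl⟩
    have hXi : X i ∈ supported R s := Algebra.subset_adjoin (Set.mem_image_of_mem X hi)
    exact ⟨F * X i, ⟨⟨(mul_mem hs hXi : F * X i ∈ supported R s),
      hn.mul (isHomogeneous_X R i)⟩, Ideal.mul_mem_right _ _ hI⟩, by simp⟩

end MvPolynomial

namespace RingTheory.Sequence

variable {R σ : Type*} [CommRing R]

/-- Quasi-regularity of `(x i)_{i ∈ s}` in the sense of Matsumura, §16, i.e.
`gr_Q R ≅ (R ⧸ Q)[X_i | i ∈ s]` for `Q = (x i)_{i ∈ s}`. -/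
def IsQuasiRegularOn (x : σ → R) (s : Set σ) : Prop :=
  ∀ (n : ℕ) (F : MvPolynomial σ R), F ∈ supported R s → F.IsHomogeneous n →
    aeval x F ∈ Ideal.span (x '' s) ^ (n + 1) → F ∈ (Ideal.span (x '' s)).map C

variable (x : σ → R) {s : Set σ}

theorem mem_map_C_of_aeval_mem_pow_succ {n : ℕ}
    (h : ∀ F ∈ supported R s, F.IsHomogeneous n → aeval x F = 0 →
      F ∈ (Ideal.span (x '' s)).map C)
    {F : MvPolynomial σ R} (hs : F ∈ supported R s) (hn : F.IsHomogeneous n)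
    (hF : aeval x F ∈ Ideal.span (x '' s) ^ (n + 1)) : F ∈ (Ideal.span (x '' s)).map C := by
  rw [pow_succ'] at hF
  obtain ⟨P, hPs, hPn, hPQ, hP⟩ := exists_isHomogeneous_of_mem_mul_span_image_pow x hF
  have := h (F - P) (sub_mem hs hPs) (hn.sub hPn) (by rw [map_sub, hP, sub_self])
  simpa using add_mem this hPQ

theorem isQuasiRegularOn_empty : IsQuasiRegularOn x ∅ := by
  intro n F hs _ hF
  rw [supported_empty, Algebra.mem_bot] at hs
  obtain ⟨c, rfl⟩ := hs
  simpa using hF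

theorem IsQuasiRegularOn.isSMulRegular_quotient_pow (hx : IsQuasiRegularOn x s) {z : R}
    (hz : IsSMulRegular (R ⧸ Ideal.span (x '' s)) z) (m : ℕ) :
    IsSMulRegular (R ⧸ Ideal.span (x '' s) ^ m) z := by
  rw [isSMulRegular_quotient_iff_mem_of_smul_mem]
  induction m with
  | zero => simp
  | succ m ih =>
    intro r hr
    obtain ⟨F, hs, hm, -, rfl⟩ := exists_isHomogeneous_of_mem_mul_span_image_pow x (I := ⊤)
      (by rw [Ideal.top_mul]; exact ih _ (Ideal.pow_le_pow_right m.le_succ hr))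
    have hzF : C z * F ∈ (Ideal.span (x '' s)).map C :=
      hx m _ (mul_mem (Subalgebra.algebraMap_mem _ z) hs) (hm.C_mul z) (by simpa using hr)
    have hF : F ∈ (Ideal.span (x '' s)).map C := mem_map_C_iff.mpr fun d =>
      mem_of_isSMulRegular_quotient_of_smul_mem hz (by simpa using mem_map_C_iff.mp hzF d)
    rw [pow_succ']
    exact aeval_mem_mul_span_image_pow x hs hm hF

theorem IsQuasiRegularOn.insert_of_isSMulRegular (hx : IsQuasiRegularOn x s) {i : σ}
    (hi : IsSMulRegular (R ⧸ Ideal.span (x '' s)) (x i)) : IsQuasiRegularOn x (insert i s) := by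
  have hQ : Ideal.span (x '' s) ≤ Ideal.span (x '' insert i s) :=
    Ideal.span_mono (Set.image_mono (Set.subset_insert i s))
  suffices h0 : ∀ n, ∀ F ∈ supported R (insert i s), F.IsHomogeneous n → aeval x F = 0 →
      F ∈ (Ideal.span (x '' insert i s)).map C from
    fun n F hs hn hF => mem_map_C_of_aeval_mem_pow_succ x (h0 n) hs hn hF
  intro n
  induction n using Nat.strong_induction_on with
  | _ n ih =>
  intro F hs hn hF
  rcases n with _ | m
  · rw [hn.eq_zero_of_aeval_eq_zero hF]
    exact zero_mem _
  obtain ⟨H, hHs, hHm, G, hGs, hGn, rfl⟩ := exists_eq_X_mul_add_of_isHomogeneous hs hn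
  have hxH : x i * aeval x H = -aeval x G := by
    rw [map_add, map_mul, aeval_X] at hF
    linear_combination hF
  have hHQ : aeval x H ∈ Ideal.span (x '' s) ^ (m + 1) := by
    refine mem_of_isSMulRegular_quotient_of_smul_mem (hx.isSMulRegular_quotient_pow x hi _) ?_
    rw [smul_eq_mul, hxH, ← Ideal.top_mul (_ ^ _)]
    exact neg_mem (aeval_mem_mul_span_image_pow x hGs hGn
      (by rw [Ideal.map_top]; exact Submodule.mem_top))
  have hH : H ∈ (Ideal.span (x '' insert i s)).map C :=
    mem_map_C_of_aeval_mem_pow_succ x (ih m m.lt_succ_self) hHs hHm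
      (Ideal.pow_right_mono hQ _ hHQ)
  -- `G + x i • P` is a form in the old variables vanishing at `x`, where `P(x) = H(x)`.
  obtain ⟨P, hPs, hPn, -, hP⟩ := exists_isHomogeneous_of_mem_mul_span_image_pow x (I := ⊤)
    (by rwa [Ideal.top_mul])
  have hGP : G + C (x i) * P ∈ (Ideal.span (x '' s)).map C := by
    refine hx (m + 1) _ (add_mem hGs (mul_mem (Subalgebra.algebraMap_mem _ (x i)) hPs))
      (hGn.add (hPn.C_mul _)) ?_
    rw [map_add, map_mul, aeval_C, hP, Algebra.algebraMap_self, RingHom.id_apply, hxH,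
      add_neg_cancel]
    exact zero_mem _
  have hxi : (C (x i) : MvPolynomial σ R) ∈ (Ideal.span (x '' insert i s)).map C :=
    Ideal.mem_map_of_mem C (Ideal.subset_span (Set.mem_image_of_mem x (Set.mem_insert i s)))
  rw [show G = G + C (x i) * P - C (x i) * P by ring]
  exact add_mem (Ideal.mul_mem_left _ _ hH)
    (sub_mem (Ideal.map_mono hQ hGP) (Ideal.mul_mem_right _ _ hxi))

theorem IsWeaklyRegular.isSMulRegular_quotient_span_image {N : ℕ} {x : Fin N → R}
    (h : IsWeaklyRegular R (List.ofFn x)) (i : Fin N) :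
    IsSMulRegular (R ⧸ Ideal.span (x '' {j | (j : ℕ) < i})) (x i) := by
  have hi := h.regular_mod_prev i (by simp)
  have hQ : (Ideal.ofList ((List.ofFn x).take i) • ⊤ : Submodule R R) =
      Ideal.span (x '' {j | (j : ℕ) < i}) := by
    rw [smul_eq_mul, Ideal.mul_top, Ideal.ofList]
    congr 1
    ext r
    simp only [Set.mem_ofPred_eq, List.mem_take_iff_getElem, List.getElem_ofFn, Set.mem_image,
      List.length_ofFn]
    constructor
    · rintro ⟨j, hj, rfl⟩
      exact ⟨⟨j, by omega⟩, by simpa using hj, rfl⟩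
    · rintro ⟨j, hj, rfl⟩
      exact ⟨j, by omega, rfl⟩
  rwa [hQ, List.getElem_ofFn] at hi

theorem IsWeaklyRegular.isQuasiRegularOn_setOf_lt {N : ℕ} {x : Fin N → R}
    (h : IsWeaklyRegular R (List.ofFn x)) {t : ℕ} (ht : t ≤ N) :
    IsQuasiRegularOn x {j | (j : ℕ) < t} := by
  induction t with
  | zero => simpa using isQuasiRegularOn_empty x
  | succ t ih =>
    have hset : {j : Fin N | (j : ℕ) < t + 1} =
        insert (⟨t, ht⟩ : Fin N) {j : Fin N | (j : ℕ) < t} := by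
      ext j
      simp only [Set.mem_ofPred_eq, Set.mem_insert_iff, Fin.ext_iff]
      omega
    rw [hset]
    exact (ih (by omega)).insert_of_isSMulRegular x
      (h.isSMulRegular_quotient_span_image ⟨t, ht⟩)

end RingTheory.Sequence

theorem stmt5_general {R : Type*} [CommRing R] {s : ℕ}
    (x : Fin (s + 1) → R)
    (hreg : RingTheory.Sequence.IsRegular R (List.ofFn x)) (n : ℕ) :
    (⨅ α ∈ Finset.Icc 1 n,
        (Ideal.span {x (Fin.last s) ^ α} +
          (Ideal.span (Set.range fun i : Fin s => x i.castSucc)) ^ (n + 1 - α)))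
      = (Ideal.span (Set.range x)) ^ n := by
  have hQ : Set.range (fun i : Fin s => x i.castSucc) = x '' {j | (j : ℕ) < s} := by
    rw [← Fin.range_castSucc, ← Set.range_comp]
    rfl
  have hP : Set.range x = insert (x (Fin.last s)) (x '' {j | (j : ℕ) < s}) := by
    rw [← Set.image_insert_eq, ← Set.image_univ]
    congr 1
    ext j
    simp only [Set.mem_univ, Set.mem_insert_iff, Fin.ext_iff, Fin.val_last, Set.mem_ofPred_eq,
      true_iff]
    omega
  have hx := hreg.toIsWeaklyRegular
  have hz := (hx.isQuasiRegularOn_setOf_lt s.le_succ).isSMulRegular_quotient_pow x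
    (hx.isSMulRegular_quotient_span_image (Fin.last s))
  rw [hQ, hP, Ideal.span_insert]
  simpa only [Submodule.add_eq_sup] using Ideal.iInf_span_pow_sup_pow_eq hz n

theorem stmt5 {R : Type*} [CommRing R] [IsLocalRing R] [IsNoetherianRing R] {s : ℕ}
    (x : Fin (s + 1) → R) (hmem : ∀ i, x i ∈ IsLocalRing.maximalIdeal R)
    (hreg : RingTheory.Sequence.IsRegular R (List.ofFn x)) (n : ℕ) (hn : 1 ≤ n) :
    (⨅ α ∈ Finset.Icc 1 n,
        (Ideal.span {x (Fin.last s) ^ α} +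
          (Ideal.span (Set.range fun i : Fin s => x i.castSucc)) ^ (n + 1 - α)))
      = (Ideal.span (Set.range x)) ^ n :=
  stmt5_general x hreg n
end

section
/- Let (R, m) be a Noetherian local ring of dimension d, and let b(R) = ⋂_{x, s<d} Ann((Q_s : x_{s+1})/Q_s) over all systems of parameters x. Then for every part of a system of parameters x_1,…,x_i with i < d, we have b(R) ⊆ b(R/(x_1,…,x_i)). -/
/-- `x` is a system of parameters of the local ring `R`. -/
def IsSOP (R : Type*) [CommRing R] [IsLocalRing R] {d : ℕ} (x : Fin d → R) : Prop :=
  (∀ i, x i ∈ IsLocalRing.maximalIdeal R) ∧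
    (Ideal.span (Set.range x)).radical = IsLocalRing.maximalIdeal R

/-- `Q_s = (x_1, …, x_s)`. -/
def Qup {R : Type*} [CommRing R] {d : ℕ} (x : Fin d → R) (s : ℕ) : Ideal R :=
  Ideal.span (x '' {i | (i : ℕ) < s})

/-- The Schenzel ideal `b(R)`. -/
noncomputable def bIdeal (R : Type*) [CommRing R] [IsLocalRing R] (d : ℕ) : Ideal R :=
  ⨅ (x : Fin d → R) (_ : IsSOP R x) (s : Fin d),
    Submodule.colon (Qup x (s : ℕ))
      (Submodule.colon (Qup x (s : ℕ)) (Ideal.span {x s}))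

/-!
Given a system of parameters `y` of `R/Q_i`, lift its entries to `R` and put them after
`x_1, …, x_i`. The result `z` is a system of parameters of `R`, because `(z)` is the preimage of
the `m`-primary ideal `(y)`. Moreover `Q_{i+s}(z)` contains `Q_i`, the kernel of `R → R/Q_i`, and
maps onto `Q_s(y)`; so the colon ideals `Q_{i+s}(z) : z_{i+s+1}` map onto `Q_s(y) : y_{s+1}`, and
an element of `b(R)` annihilates `(Q_s(y) : y_{s+1})/Q_s(y)`.
-/

namespace Ideal

variable {R S : Type*} [CommRing R] [CommRing S] {f : R →+* S}

theorem map_colon_singleton_of_surjective (hf : Function.Surjective f) {I : Ideal R}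
    (hI : RingHom.ker f ≤ I) (z : R) :
    (I.map f).colon {f z} = (I.colon {z}).map f := by
  have hcomap : (I.map f).comap f = I := by
    rw [comap_map_of_surjective f hf, ← RingHom.ker_eq_comap_bot, sup_eq_left.mpr hI]
  refine le_antisymm (fun c hc => ?_) (map_le_iff_le_comap.mpr fun b hb => ?_)
  · obtain ⟨b, rfl⟩ := hf c
    refine mem_map_of_mem f (Submodule.mem_colon_singleton.mpr ?_)
    rw [← hcomap, mem_comap, smul_eq_mul, map_mul]
    exact Submodule.mem_colon_singleton.mp hc
  · rw [mem_comap, Submodule.mem_colon_singleton, smul_eq_mul, ← map_mul]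
    exact mem_map_of_mem f (Submodule.mem_colon_singleton.mp hb)

theorem map_colon_le_of_surjective (hf : Function.Surjective f) (I J : Ideal R) :
    (I.colon J).map f ≤ (I.map f).colon (J.map f) := by
  refine map_le_iff_le_comap.mpr fun a ha => Submodule.mem_colon.mpr fun c hc => ?_
  obtain ⟨b, hb, rfl⟩ := (mem_map_iff_of_surjective f hf).mp hc
  rw [smul_eq_mul, ← map_mul]
  exact mem_map_of_mem f (Submodule.mem_colon.mp ha b hb)

theorem map_mem_colon_colon_of_surjective (hf : Function.Surjective f) {I : Ideal R}
    (hI : RingHom.ker f ≤ I) {a z : R} (ha : a ∈ I.colon (I.colon {z})) :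
    f a ∈ (I.map f).colon ((I.map f).colon {f z}) := by
  rw [map_colon_singleton_of_surjective hf hI]
  exact map_colon_le_of_surjective hf _ _ (mem_map_of_mem f ha)

end Ideal

theorem Qup_eq_span_range {R : Type*} [CommRing R] {d : ℕ} (x : Fin d → R) {n : ℕ}
    (hn : d ≤ n) : Qup x n = Ideal.span (Set.range x) := by
  rw [Qup, show {j : Fin d | (j : ℕ) < n} = Set.univ from
    Set.eq_univ_of_forall fun j => j.is_lt.trans_le hn, Set.image_univ]

section prefixAppend

variable {α : Type*} {d : ℕ} (x : Fin d → α) (i : ℕ) (y : Fin (d - i) → α)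

/-- When `d ≤ i`, `Fin (d - i)` is empty and this is just `x`. -/
def prefixAppend (j : Fin d) : α :=
  if h : (j : ℕ) < i then x j else y ⟨j - i, by omega⟩

theorem prefixAppend_of_lt {j : Fin d} (hj : (j : ℕ) < i) : prefixAppend x i y j = x j :=
  dif_pos hj

theorem prefixAppend_of_le {j : Fin d} (hj : i ≤ j) :
    prefixAppend x i y j = y ⟨j - i, by omega⟩ :=
  dif_neg (by omega)

theorem prefixAppend_add (k : Fin (d - i)) :
    prefixAppend x i y ⟨i + k, by omega⟩ = y k := by
  simp [prefixAppend]

end prefixAppend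

section Quotient

variable {R : Type*} [CommRing R] {d : ℕ} (x : Fin d → R) (i : ℕ) (y : Fin (d - i) → R)

theorem Qup_le_Qup_prefixAppend (s : ℕ) : Qup x i ≤ Qup (prefixAppend x i y) (i + s) := by
  refine Ideal.span_le.mpr ?_
  rintro _ ⟨j, hj, rfl⟩
  rw [← prefixAppend_of_lt x i y hj]
  exact Ideal.subset_span ⟨j, by simp at hj ⊢; omega, rfl⟩

local notation "π" => Ideal.Quotient.mk (Qup x i)

theorem map_Qup_prefixAppend (s : ℕ) :
    (Qup (prefixAppend x i y) (i + s)).map π = Qup (π ∘ y) s := by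
  refine le_antisymm (Ideal.map_le_iff_le_comap.mpr <| Ideal.span_le.mpr ?_)
    (Ideal.span_le.mpr ?_)
  · rintro _ ⟨j, hj, rfl⟩
    rw [SetLike.mem_coe, Ideal.mem_comap]
    by_cases h : (j : ℕ) < i
    · have hxj : π (x j) = 0 :=
        Ideal.Quotient.eq_zero_iff_mem.mpr (Ideal.subset_span ⟨j, h, rfl⟩)
      rw [prefixAppend_of_lt x i y h, hxj]
      exact zero_mem _
    · rw [prefixAppend_of_le x i y (not_lt.mp h)]
      exact Ideal.subset_span ⟨_, by simp at hj ⊢; omega, rfl⟩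
  · rintro _ ⟨k, hk, rfl⟩
    rw [Function.comp_apply, ← prefixAppend_add x i y]
    exact Ideal.mem_map_of_mem _ (Ideal.subset_span ⟨_, by simp at hk ⊢; omega, rfl⟩)

theorem comap_Qup_prefixAppend (s : ℕ) :
    (Qup (π ∘ y) s).comap π = Qup (prefixAppend x i y) (i + s) := by
  rw [← map_Qup_prefixAppend, Ideal.comap_map_mk (Qup_le_Qup_prefixAppend x i y s)]

theorem isSOP_prefixAppend [IsLocalRing R] [IsLocalRing (R ⧸ Qup x i)]
    (hy : IsSOP (R ⧸ Qup x i) (π ∘ y)) : IsSOP R (prefixAppend x i y) := by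
  have hmax : (IsLocalRing.maximalIdeal (R ⧸ Qup x i)).comap π = IsLocalRing.maximalIdeal R :=
    IsLocalRing.eq_maximalIdeal (Ideal.comap_isMaximal_of_surjective _ Ideal.Quotient.mk_surjective)
  have hrad : (Ideal.span (Set.range (prefixAppend x i y))).radical =
      IsLocalRing.maximalIdeal R := by
    rw [← Qup_eq_span_range _ (show d ≤ i + (d - i) by omega), ← comap_Qup_prefixAppend,
      Qup_eq_span_range _ le_rfl, ← Ideal.comap_radical, hy.2, hmax]
  refine ⟨fun j => ?_, hrad⟩
  rw [← hrad]
  exact Ideal.le_radical (Ideal.subset_span ⟨j, rfl⟩)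

end Quotient

theorem stmt7_general {R : Type*} [CommRing R] [IsLocalRing R] {d : ℕ}
    (x : Fin d → R) (i : ℕ)
    [IsLocalRing (R ⧸ Qup x i)] :
    bIdeal R d ≤ Ideal.comap (Ideal.Quotient.mk (Qup x i)) (bIdeal (R ⧸ Qup x i) (d - i)) := by
  intro a ha
  simp only [bIdeal, Ideal.mem_comap, Ideal.mem_iInf, Ideal.colon_span] at ha ⊢
  intro y hy s
  obtain ⟨y, rfl⟩ := Ideal.Quotient.mk_surjective.comp_left y
  have key := ha (prefixAppend x i y) (isSOP_prefixAppend x i y hy) ⟨i + s, by omega⟩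
  have hker : RingHom.ker (Ideal.Quotient.mk (Qup x i)) ≤ Qup (prefixAppend x i y) (i + s) := by
    rw [Ideal.mk_ker]
    exact Qup_le_Qup_prefixAppend x i y s
  have hmapped := Ideal.map_mem_colon_colon_of_surjective Ideal.Quotient.mk_surjective hker key
  rwa [map_Qup_prefixAppend, prefixAppend_add] at hmapped

theorem stmt7 {R : Type*} [CommRing R] [IsLocalRing R] [IsNoetherianRing R] {d : ℕ}
    (hd : ringKrullDim R = d) (x : Fin d → R) (hx : IsSOP R x) (i : ℕ) (hi : i < d)
    [IsLocalRing (R ⧸ Qup x i)] :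
    bIdeal R d ≤ Ideal.comap (Ideal.Quotient.mk (Qup x i)) (bIdeal (R ⧸ Qup x i) (d - i)) :=
  stmt7_general x i
end

section
/- Let (R,m) be a Noetherian local ring of dimension d with Schenzel ideal b(R) = ⋂_{x,s<d} Ann((Q_s:x_{s+1})/Q_s). Then for every system of parameters x_1,…,x_d, every 1 ≤ s ≤ d−1, and every n ≥ 1: b(R)^{2^{s-1}}·(Q_s^n : x_{s+1}) ⊆ Q_s^n, where Q_s = (x_1,…,x_s). -/
open Ideal

theorem Ideal.sup_pow_add_le_pow_succ_sup_pow {R : Type*} [CommSemiring R] (I J : Ideal R)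
    (n m : ℕ) : (I ⊔ J) ^ (n + m) ≤ I ^ (n + 1) ⊔ J ^ m := by
  rw [← Ideal.add_eq_sup, ← Ideal.add_eq_sup, add_pow, Ideal.sum_eq_sup]
  refine Finset.sup_le fun i _ => ?_
  by_cases hi : n + 1 ≤ i
  · exact mul_le_left.trans (mul_le_left.trans ((pow_le_pow_right hi).trans le_sup_left))
  · exact mul_le_left.trans (mul_le_right.trans ((pow_le_pow_right (by omega)).trans le_sup_right))

theorem Set.image_update_of_notMem {α β : Type*} [DecidableEq α] {s : Set α} {a : α}
    (ha : a ∉ s) (f : α → β) (b : β) : Function.update f a b '' s = f '' s :=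
  Set.EqOn.image_eq fun _ hx => Function.update_of_ne (ne_of_mem_of_not_mem hx ha) _ _

section PowerPeeling

variable {R : Type*} [CommRing R] {Q J B : Ideal R} {w : R} {n : ℕ}

theorem mul_pow_mem_sup_span_pow_sup {m : ℕ} (hm : m ≤ n) {q : R} (hq : q ∈ Q ^ (n - m) ⊔ J) :
    q * w ^ m ∈ (Q ⊔ span {w}) ^ n ⊔ J := by
  have hle : (Q ^ (n - m) ⊔ J) * span {w} ^ m ≤ (Q ⊔ span {w}) ^ n ⊔ J := by
    rw [Ideal.sup_mul]
    refine sup_le_sup ?_ mul_le_left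
    calc Q ^ (n - m) * span {w} ^ m
        ≤ (Q ⊔ span {w}) ^ (n - m) * (Q ⊔ span {w}) ^ m :=
          mul_mono (pow_right_mono le_sup_left _) (pow_right_mono le_sup_right _)
      _ = (Q ⊔ span {w}) ^ n := by rw [← pow_add, Nat.sub_add_cancel hm]
  exact hle (mul_mem_mul hq (pow_mem_pow (mem_span_singleton_self w) m))

theorem mul_mem_sup_span_pow_sup
    (hB : ∀ i, 0 < i → i < n → B * (Q ^ (n - i) ⊔ J).colon (span {w ^ i}) ≤ Q ^ (n - i) ⊔ J)
    {m : ℕ} (hm : m ≤ n) {f : R}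
    (hf : ∀ k, m < k → k ≤ n → f * w ^ m ∈ Q ^ (n + 1 - k) ⊔ span {w ^ k} ⊔ J)
    {r : R} (hr : r ∈ B) : r * (f * w ^ m) ∈ (Q ⊔ span {w}) ^ n ⊔ J := by
  induction hj : n - m generalizing m f with
  | zero =>
    obtain rfl : m = n := by omega
    exact mem_sup_left (mul_mem_left _ _ (mul_mem_left _ _
      (pow_mem_pow (mem_sup_right (mem_span_singleton_self w)) m)))
  | succ j ih =>
    have hfm := hf (m + 1) (by omega) (by omega)
    rw [Nat.add_sub_add_right] at hfm
    obtain ⟨p, hp, c, hc, hpc⟩ := Submodule.mem_sup.1 hfm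
    obtain ⟨a, ha, v, hv, rfl⟩ := Submodule.mem_sup.1 hp
    obtain ⟨g, rfl⟩ := mem_span_singleton'.1 hv
    -- `f * w ^ m = a + g * w ^ (m + 1) + c`: the induction hypothesis takes `g * w ^ (m + 1)`,
    -- and `hB` takes `(f - g * w) * w ^ m`.
    have hh : (f - g * w) * w ^ m ∈ Q ^ (n - m) ⊔ J := by
      rw [show (f - g * w) * w ^ m = a + c by linear_combination -hpc]
      exact add_mem (mem_sup_left ha) (mem_sup_right hc)
    have hrh : r * (f - g * w) ∈ Q ^ (n - m) ⊔ J := by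
      rcases Nat.eq_zero_or_pos m with rfl | hm0
      · simpa using mul_mem_left _ r hh
      · exact hB m hm0 (by omega) (mul_mem_mul hr (mem_colon_span_singleton.2 hh))
    have hg : r * (g * w ^ (m + 1)) ∈ (Q ⊔ span {w}) ^ n ⊔ J := by
      refine ih (by omega) (fun k hk hkn => ?_) (by omega)
      rw [show g * w ^ (m + 1) = f * w ^ m - (f - g * w) * w ^ m by ring]
      refine sub_mem (hf k (by omega) hkn) ?_
      exact sup_le_sup_right (le_sup_of_le_left (pow_le_pow_right (by omega))) J hh
    rw [show r * (f * w ^ m) = r * (f - g * w) * w ^ m + r * (g * w ^ (m + 1)) by ring]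
    exact add_mem (mul_pow_mem_sup_span_pow_sup hm hrh) hg

end PowerPeeling

theorem Fin.exists_perm_image_lt_card_eq {d : ℕ} (A : Finset (Fin d)) {t : Fin d} (ht : t ∉ A) :
    ∃ (hA : A.card < d) (σ : Equiv.Perm (Fin d)),
      σ '' {i | (i : ℕ) < A.card} = A ∧ σ ⟨A.card, hA⟩ = t := by
  classical
  have hA : A.card < d := by simpa using Finset.card_lt_univ_of_notMem ht
  have hcard : Fintype.card {i : Fin d // (i : ℕ) < A.card} = Fintype.card A := by
    rw [Fintype.card_subtype, Fin.card_filter_val_lt, Fintype.card_coe, min_eq_right hA.le]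
  set e := Fintype.equivOfCardEq hcard
  set k : Fin d := ⟨A.card, hA⟩
  set σ₀ := e.extendSubtype
  have hσ₀k : σ₀ k ∉ A := e.extendSubtype_not_mem k (lt_irrefl _)
  refine ⟨hA, Equiv.swap (σ₀ k) t * σ₀, ?_, Equiv.swap_apply_left _ _⟩
  ext j
  constructor
  · rintro ⟨i, hi, rfl⟩
    have hσ₀i : σ₀ i ∈ A := e.extendSubtype_mem i hi
    rw [Equiv.Perm.mul_apply, Equiv.swap_apply_of_ne_of_ne (ne_of_mem_of_not_mem hσ₀i hσ₀k)
      (ne_of_mem_of_not_mem hσ₀i ht)]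
    exact hσ₀i
  · intro hj
    obtain ⟨⟨i, hi⟩, hij⟩ := e.surjective ⟨j, hj⟩
    have hσ₀i : σ₀ i = j := by rw [e.extendSubtype_apply_of_mem i hi, hij]
    refine ⟨i, hi, ?_⟩
    rw [Equiv.Perm.mul_apply, hσ₀i, Equiv.swap_apply_of_ne_of_ne (ne_of_mem_of_not_mem hj hσ₀k)
      (ne_of_mem_of_not_mem hj ht)]

namespace IsSOP

variable {R : Type*} [CommRing R] [IsLocalRing R] {d : ℕ} {y : Fin d → R}

theorem comp_perm (hy : IsSOP R y) (σ : Equiv.Perm (Fin d)) : IsSOP R (y ∘ σ) :=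
  ⟨fun i => hy.1 (σ i), by rw [σ.surjective.range_comp, hy.2]⟩

theorem update_pow (hy : IsSOP R y) (a : Fin d) {k : ℕ} (hk : k ≠ 0) :
    IsSOP R (Function.update y a (y a ^ k)) := by
  classical
  refine ⟨fun i => ?_, le_antisymm ?_ ?_⟩
  · rcases eq_or_ne i a with rfl | hi
    · simpa using pow_mem_of_mem _ (hy.1 i) k (Nat.pos_of_ne_zero hk)
    · simpa [hi] using hy.1 i
  · rw [← hy.2]
    refine radical_mono (span_le.2 ?_)
    rintro _ ⟨i, rfl⟩
    rcases eq_or_ne i a with rfl | hi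
    · simpa using pow_mem_of_mem _ (subset_span (Set.mem_range_self i)) k (Nat.pos_of_ne_zero hk)
    · simpa [hi] using subset_span (Set.mem_range_self i)
  · rw [← hy.2]
    refine radical_le_radical_iff.2 (span_le.2 ?_)
    rintro _ ⟨i, rfl⟩
    have hzi := subset_span (α := R) (Set.mem_range_self (f := Function.update y a (y a ^ k)) i)
    rcases eq_or_ne i a with rfl | hi
    · exact ⟨k, by simpa using hzi⟩
    · exact ⟨1, by simpa [hi] using hzi⟩

end IsSOP

section BIdeal

variable {R : Type*} [CommRing R] [IsLocalRing R] {d : ℕ}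

theorem bIdeal_mul_colon_le {y : Fin d → R} (hy : IsSOP R y) (i : Fin d) :
    bIdeal R d * (Qup y i).colon (span {y i}) ≤ Qup y i :=
  mul_le.2 fun r hr u hu => by
    have hr' := (iInf_le_of_le y (iInf_le_of_le hy (iInf_le _ i)) : bIdeal R d ≤ _) hr
    simpa [mul_comm] using Submodule.mem_colon.1 hr' u hu

theorem bIdeal_mul_colon_span_image_le {y : Fin d → R} (hy : IsSOP R y) {A : Finset (Fin d)}
    {t : Fin d} (ht : t ∉ A) :
    bIdeal R d * (span (y '' A)).colon (span {y t}) ≤ span (y '' A) := by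
  obtain ⟨hA, σ, hσA, hσt⟩ := Fin.exists_perm_image_lt_card_eq A ht
  have hQ : Qup (y ∘ σ) A.card = span (y '' A) := by rw [Qup, Set.image_comp, hσA]
  simpa [hQ, hσt] using bIdeal_mul_colon_le (hy.comp_perm σ) ⟨A.card, hA⟩

theorem bIdeal_pow_mul_colon_le {S : Finset (Fin d)} (hS : S.Nonempty) {y : Fin d → R}
    (hy : IsSOP R y) {T : Finset (Fin d)} (hST : Disjoint S T) {t : Fin d} (htS : t ∉ S)
    (htT : t ∉ T) (n : ℕ) :
    bIdeal R d ^ 2 ^ (S.card - 1) * (span (y '' S) ^ n ⊔ span (y '' T)).colon (span {y t})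
      ≤ span (y '' S) ^ n ⊔ span (y '' T) := by
  induction hS using Finset.Nonempty.cons_induction generalizing y T t n with
  | singleton a =>
    rcases Nat.eq_zero_or_pos n with rfl | hn
    · simp [one_eq_top]
    have haT : a ∉ T := Finset.disjoint_singleton_left.1 hST
    have hta : t ≠ a := by simpa using htS
    have hI : span (y '' {a}) ^ n ⊔ span (y '' T)
        = span (Function.update y a (y a ^ n) '' ↑(insert a T)) := by
      rw [Finset.coe_insert, Set.image_insert_eq, span_insert, Set.image_update_of_notMem haT]
      simp [span_singleton_pow]
    have key := bIdeal_mul_colon_span_image_le (hy.update_pow a hn.ne') (A := insert a T)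
      (t := t) (by simp [hta, htT])
    rw [Function.update_of_ne hta, ← hI] at key
    rwa [Finset.coe_singleton, Finset.card_singleton, Nat.sub_self, pow_zero, pow_one]
  | cons a S haS hS ih =>
    obtain ⟨haT, hST⟩ : a ∉ T ∧ Disjoint S T := by simpa using hST
    obtain ⟨hta, htS⟩ : t ≠ a ∧ t ∉ S := by simpa using htS
    set B := bIdeal R d ^ 2 ^ (S.card - 1)
    set Q := span (y '' S)
    set J := span (y '' T)
    set w := y a
    have hQ : span (y '' ↑(Finset.cons a S haS)) = Q ⊔ span {w} := by
      rw [Finset.coe_cons, Set.image_insert_eq, span_insert, sup_comm]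
    have hB : bIdeal R d ^ 2 ^ ((Finset.cons a S haS).card - 1) = B * B := by
      rw [Finset.card_cons, Nat.add_sub_cancel, ← pow_add, ← two_mul, ← pow_succ',
        Nat.sub_add_cancel hS.card_pos]
    have hcolon_t : ∀ k, 0 < k → k ≤ n → B * ((Q ⊔ span {w}) ^ n ⊔ J).colon (span {y t})
        ≤ Q ^ (n + 1 - k) ⊔ span {w ^ k} ⊔ J := by
      intro k hk hkn
      have h := ih (hy.update_pow a hk.ne') (T := Finset.cons a T haT) (by simp [haS, hST]) htS
        (by simp [hta, htT]) (n + 1 - k)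
      rw [Finset.coe_cons, Set.image_insert_eq, span_insert, Set.image_update_of_notMem haS,
        Set.image_update_of_notMem haT, Function.update_self, Function.update_of_ne hta,
        ← sup_assoc] at h
      refine le_trans (mul_mono_right (Submodule.colon_mono (sup_le_sup_right ?_ J) le_rfl)) h
      have hpow := sup_pow_add_le_pow_succ_sup_pow Q (span {w}) (n - k) k
      rwa [Nat.sub_add_cancel hkn, span_singleton_pow, show n - k + 1 = n + 1 - k by omega] at hpow
    have hcolon_w : ∀ i, 0 < i → i < n → B * (Q ^ (n - i) ⊔ J).colon (span {w ^ i})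
        ≤ Q ^ (n - i) ⊔ J := by
      intro i hi _
      have h := ih (hy.update_pow a hi.ne') hST haS haT (n - i)
      rwa [Set.image_update_of_notMem haS, Set.image_update_of_notMem haT,
        Function.update_self] at h
    rw [hB, hQ, mul_assoc]
    refine mul_le.2 fun r hr v hv => ?_
    simpa using mul_mem_sup_span_pow_sup hcolon_w n.zero_le
      (fun k hk hkn => by simpa using hcolon_t k hk hkn hv) hr

end BIdeal

theorem stmt8_general {R : Type*} [CommRing R] [IsLocalRing R] {d : ℕ}
    (x : Fin d → R) (hx : IsSOP R x)
    (s : ℕ) (hs : 1 ≤ s) (hsd : s < d) (n : ℕ) :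
    bIdeal R d ^ 2 ^ (s - 1) *
        Submodule.colon (Qup x s ^ n) (Ideal.span {x ⟨s, hsd⟩})
      ≤ Qup x s ^ n := by
  set S : Finset (Fin d) := {i | (i : ℕ) < s}
  have hQ : Qup x s = span (x '' S) := by simp [Qup, S]
  have hS : S.Nonempty := ⟨⟨0, by omega⟩, Finset.mem_filter.2 ⟨Finset.mem_univ _, hs⟩⟩
  have hcard : S.card = s := by simp [S, Fin.card_filter_val_lt, hsd.le]
  have h := bIdeal_pow_mul_colon_le hS hx (Finset.disjoint_empty_right S) (t := ⟨s, hsd⟩)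
    (by simp [S]) (Finset.notMem_empty _) n
  simpa [hQ, hcard] using h

theorem stmt8 {R : Type*} [CommRing R] [IsLocalRing R] [IsNoetherianRing R] {d : ℕ}
    (hd : ringKrullDim R = d) (x : Fin d → R) (hx : IsSOP R x)
    (s : ℕ) (hs : 1 ≤ s) (hsd : s < d) (n : ℕ) (hn : 1 ≤ n) :
    bIdeal R d ^ 2 ^ (s - 1) *
        Submodule.colon (Qup x s ^ n) (Ideal.span {x ⟨s, hsd⟩})
      ≤ Qup x s ^ n :=
  stmt8_general x hx s hs hsd n
end
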